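/- Contractual exculpation: for every bilateral contract γ = A says c | B says d with c 0-free, there exist a bilateral contract γ' and an A-solo trace η of length at most 2 such that γ —η→ γ' and A is not culpable in γ'. -/

import Mathlib

/-! Contracts à la Castagna et al., as in "Contracts in distributed systems".
Atoms are integers; the involution `co` is negation, the success atom `e` is 0
(so that `co e = e`). Contracts use de Bruijn indices for recursion variables. -/

abbrev Atom := ℤ

def co (a : Atom) : Atom := -a

def eAtom : Atom := 0

inductive Contract : Type where
  | intSum : List (Atom × Contract) → Contract
  | extSum : List (Atom × Contract) → Contract
  | rdy    : Atom → Contract → Contract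
  | recur  : Contract → Contract
  | var    : ℕ → Contract

namespace Contract

/-- The failure contract `0` (empty internal and external sums are identified
by structural congruence). -/
def isZero (c : Contract) : Prop := c = intSum [] ∨ c = extSum []

-- Substitution of a (closed) contract `u` for de Bruijn variable `k`.
mutual
def csubst (u : Contract) : ℕ → Contract → Contract
  | k, var n => if n = k then u else var n
  | k, recur c => recur (csubst u (k+1) c)
  | k, rdy a c => rdy a (csubst u k c)
  | k, intSum l => intSum (csubstL u k l)
  | k, extSum l => extSum (csubstL u k l)
def csubstL (u : Contract) : ℕ → List (Atom × Contract) → List (Atom × Contract)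
  | _, [] => []
  | k, (a, c) :: t => (a, csubst u k c) :: csubstL u k t
end

/-- The success contract `E = rec X. e ; X`. -/
def Econ : Contract := recur (intSum [(eAtom, var 0)])

/-- `var n` occurs unguarded (not under any sum / rdy prefix). -/
inductive UnguardedVar : ℕ → Contract → Prop where
  | var : UnguardedVar n (var n)
  | recur : UnguardedVar (n+1) c → UnguardedVar n (recur c)

/-- Well-formed contracts with free variables below `k`: atoms in each sum are
pairwise distinct, recursion is guarded. -/
inductive WF : ℕ → Contract → Prop where
  | intSum : (l.map Prod.fst).Nodup → (∀ p ∈ l, WF k p.2) → WF k (intSum l)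
  | extSum : (l.map Prod.fst).Nodup → (∀ p ∈ l, WF k p.2) → WF k (extSum l)
  | rdy : WF k c → WF k (rdy a c)
  | recur : ¬ UnguardedVar 0 c → WF (k+1) c → WF k (recur c)
  | var : n < k → WF k (var n)

/-- `rdy`-free contracts. -/
inductive RdyFree : Contract → Prop where
  | intSum : (∀ p ∈ l, RdyFree p.2) → RdyFree (intSum l)
  | extSum : (∀ p ∈ l, RdyFree p.2) → RdyFree (extSum l)
  | recur : RdyFree c → RdyFree (recur c)
  | var : RdyFree (var n)

/-- `0`-free contracts: no empty sum occurs. -/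
inductive ZeroFree : Contract → Prop where
  | intSum : l ≠ [] → (∀ p ∈ l, ZeroFree p.2) → ZeroFree (intSum l)
  | extSum : l ≠ [] → (∀ p ∈ l, ZeroFree p.2) → ZeroFree (extSum l)
  | rdy : ZeroFree c → ZeroFree (rdy a c)
  | recur : ZeroFree c → ZeroFree (recur c)
  | var : ZeroFree (var n)

/-- A `rdy` prefix may occur at top level only. -/
def TopRdy (c : Contract) : Prop :=
  RdyFree c ∨ ∃ a c', c = rdy a c' ∧ RdyFree c'

end Contract

open Contract

/-- One step of participant `A` (first component) in a bilateral contract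
`A says c | B says d`: rules [IntExt], [IntInt], [ExtExt], [Rdy] and the
failure rules, plus unfolding of recursion (structural congruence). -/
inductive StepA : Contract → Contract → Atom → Contract → Contract → Prop where
  | intExt : (a, c') ∈ l → (co a, d') ∈ m →
      StepA (.intSum l) (.extSum m) a c' (.rdy (co a) d')
  | intInt : (a, c') ∈ l →
      StepA (.intSum l) (.intSum [(co a, d')]) a c' (.rdy (co a) d')
  | extExt : (a, c') ∈ l → (co a, d') ∈ m →
      StepA (.extSum l) (.extSum m) a c' (.rdy (co a) d')
  | rdy : StepA (.rdy a c) d a c d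
  | intExtFail : (a, c') ∈ l → (∀ q ∈ m, co q.1 ≠ a) →
      StepA (.intSum l) (.extSum m) a Econ (.intSum [])
  | intIntFail : (a, c') ∈ l → ¬ (m ≠ [] ∧ ∀ q ∈ m, co q.1 = a) →
      StepA (.intSum l) (.intSum m) a Econ (.intSum [])
  | extExtFail : (a, c') ∈ l → (∀ p ∈ l, ∀ q ∈ m, p.1 ≠ co q.1) →
      StepA (.extSum l) (.extSum m) a Econ (.intSum [])
  | recL : StepA (csubst (.recur c) 0 c) d a c' d' → StepA (.recur c) d a c' d'
  | recR : StepA c (csubst (.recur d) 0 d) a c' d' → StepA c (.recur d) a c' d'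

/-- The two participants of a bilateral contract. -/
inductive Ptp : Type where
  | A | B
deriving DecidableEq

inductive CLabel : Type where
  | says : Ptp → Atom → CLabel
deriving DecidableEq

/-- Labelled transitions of bilateral contracts. -/
inductive Step : Contract × Contract → CLabel → Contract × Contract → Prop where
  | left  : StepA c d a c' d' → Step (c, d) (.says .A a) (c', d')
  | right : StepA d c a d' c' → Step (c, d) (.says .B a) (c', d')

/-- Participant `p` is culpable in the bilateral contract `γ`. -/
def frown (p : Ptp) (γ : Contract × Contract) : Prop :=
  isZero (match p with | .A => γ.1 | .B => γ.2) ∨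
  ((¬ ∃ γ', Step γ (.says p eAtom) γ') ∧ (∃ a γ', Step γ (.says p a) γ'))

/-- Tokens occurring in ready sets: atoms, or the `rdy` marker. -/
inductive RToken : Type where
  | atom : Atom → RToken
  | rdy  : RToken
deriving DecidableEq

def coT : RToken → RToken
  | .atom a => .atom (co a)
  | .rdy => .rdy

/-- Ready sets. -/
def RS : Contract → Set (Set RToken)
  | .intSum [] => {∅}
  | .intSum (p :: l) => {X | ∃ q ∈ p :: l, X = {RToken.atom q.1}}
  | .extSum [] => {∅}
  | .extSum (p :: l) => {X | X = {t | ∃ q ∈ p :: l, t = RToken.atom q.1}}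
  | .rdy _ _ => {{RToken.rdy}}
  | .recur c => RS c
  | .var _ => {∅}

/-- The defining clauses of compliance. -/
def ContractCompRel (R : Contract → Contract → Prop) : Prop :=
  ∀ c d, R c d →
    (∀ X ∈ RS c, ∀ Y ∈ RS d,
        (∃ t ∈ X, coT t ∈ Y) ∨ RToken.rdy ∈ (X ∪ Y) \ (X ∩ Y)) ∧
    (∀ μ c' d', Step (c, d) μ (c', d') → R c' d')

/-- Compliance: the largest relation satisfying `CompRel`. -/
def Compliant (c d : Contract) : Prop := ∃ R, ContractCompRel R ∧ R c d

/-- A contract succeeds. -/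
def Succeeds (c : Contract) : Prop :=
  (∃ l, c = .intSum l ∧ (eAtom, Econ) ∈ l) ∨
  (∃ l, c = .extSum l ∧ (eAtom, Econ) ∈ l) ∨
  c = .rdy eAtom Econ

/-- Multi-step reduction of bilateral contracts. -/
def Reduces : Contract × Contract → Contract × Contract → Prop :=
  Relation.ReflTransGen (fun γ γ' => ∃ μ, Step γ μ γ')

/-- Bilateral well-formedness: `rdy` at top level only and at most one `rdy`. -/
def BCWF (γ : Contract × Contract) : Prop :=
  TopRdy γ.1 ∧ TopRdy γ.2 ∧ (RdyFree γ.1 ∨ RdyFree γ.2)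

/-! If `A`'s contract is a `rdy` prefix, `A` fires it first. Guarded recursion lets both
contracts unfold to a sum or a `rdy` prefix, and steps commute with unfolding, so it suffices to
look at these heads. Either `A` is stuck there, and not culpable since its `0`-free contract is not
`0`, or `A` can move. A matching action leaves `B` with a `rdy` prefix, which blocks the `rdy`-free,
`0`-free continuation of `A`; a failure rule leaves `A` with `E`, which can always do `e`. -/

theorem co_co (a : Atom) : co (co a) = a := neg_neg a

namespace Contract

theorem csubstL_eq_map (u : Contract) (k : ℕ) (l : List (Atom × Contract)) :
    csubstL u k l = l.map fun p => (p.1, csubst u k p.2) := by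
  induction l with
  | nil => rfl
  | cons p t ih => simp only [csubstL, ih, List.map_cons]

theorem RdyFree.csubst {u c : Contract} (hu : RdyFree u) (hc : RdyFree c) (k : ℕ) :
    RdyFree (csubst u k c) := by
  induction hc generalizing k with
  | intSum _ ih =>
    simp only [Contract.csubst, csubstL_eq_map]
    exact .intSum fun _ hp => by
      obtain ⟨q, hq, rfl⟩ := List.mem_map.1 hp
      exact ih q hq k
  | extSum _ ih =>
    simp only [Contract.csubst, csubstL_eq_map]
    exact .extSum fun _ hp => by
      obtain ⟨q, hq, rfl⟩ := List.mem_map.1 hp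
      exact ih q hq k
  | recur _ ih => exact .recur (ih (k + 1))
  | @var n =>
    simp only [Contract.csubst]
    split
    · exact hu
    · exact .var

theorem ZeroFree.csubst {u c : Contract} (hu : ZeroFree u) (hc : ZeroFree c) (k : ℕ) :
    ZeroFree (csubst u k c) := by
  induction hc generalizing k with
  | intSum hne _ ih =>
    simp only [Contract.csubst, csubstL_eq_map]
    refine .intSum (by simpa using hne) fun _ hp => ?_
    obtain ⟨q, hq, rfl⟩ := List.mem_map.1 hp
    exact ih q hq k
  | extSum hne _ ih =>
    simp only [Contract.csubst, csubstL_eq_map]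
    refine .extSum (by simpa using hne) fun _ hp => ?_
    obtain ⟨q, hq, rfl⟩ := List.mem_map.1 hp
    exact ih q hq k
  | rdy _ ih => exact .rdy (ih k)
  | recur _ ih => exact .recur (ih (k + 1))
  | @var n =>
    simp only [Contract.csubst]
    split
    · exact hu
    · exact .var

theorem ZeroFree.not_isZero {c : Contract} (h : ZeroFree c) : ¬ isZero c := by
  rintro (rfl | rfl) <;> cases h <;> simp_all

inductive HeadNormal : Contract → Prop where
  | intSum (l : List (Atom × Contract)) : HeadNormal (intSum l)
  | extSum (l : List (Atom × Contract)) : HeadNormal (extSum l)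
  | rdy (a : Atom) (c : Contract) : HeadNormal (rdy a c)

theorem HeadNormal.csubst {s : Contract} (hs : HeadNormal s) (u : Contract) (k : ℕ) :
    HeadNormal (csubst u k s) := by
  cases hs <;> simp only [Contract.csubst] <;> constructor

inductive UnfoldsTo : Contract → Contract → Prop where
  | refl (c : Contract) : UnfoldsTo c c
  | recur {c s : Contract} : UnfoldsTo (csubst (recur c) 0 c) s → UnfoldsTo (recur c) s

theorem UnfoldsTo.rdyFree {c s : Contract} (h : UnfoldsTo c s) (hc : RdyFree c) :
    RdyFree s := by
  induction h with
  | refl => exact hc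
  | recur _ ih => exact ih (hc.csubst (by cases hc; assumption) 0)

theorem UnfoldsTo.zeroFree {c s : Contract} (h : UnfoldsTo c s) (hc : ZeroFree c) :
    ZeroFree s := by
  induction h with
  | refl => exact hc
  | recur _ ih => exact ih (hc.csubst (by cases hc; assumption) 0)

theorem csubst_iterate_recur (u : Contract) (j : ℕ) :
    ∀ k s, csubst u k (recur^[j] s) = recur^[j] (csubst u (k + j) s) := by
  induction j with
  | zero => intro k s; rfl
  | succ j ih =>
    intro k s
    rw [Function.iterate_succ_apply', Function.iterate_succ_apply']
    simp only [Contract.csubst, ih, Nat.add_right_comm k 1 j, Nat.add_assoc]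

theorem exists_unfoldsTo_iterate_recur {s : Contract} (hs : HeadNormal s) (j : ℕ) :
    ∃ s', UnfoldsTo (recur^[j] s) s' ∧ HeadNormal s' := by
  induction j generalizing s with
  | zero => exact ⟨s, .refl s, hs⟩
  | succ j ih =>
    rw [Function.iterate_succ_apply']
    obtain ⟨s', hu, hs'⟩ := ih (hs.csubst (recur (recur^[j] s)) j)
    exact ⟨s', .recur (by rwa [csubst_iterate_recur, Nat.zero_add]), hs'⟩

theorem UnguardedVar.lt_of_wf {n k : ℕ} {c : Contract} (hu : UnguardedVar n c) (hw : WF k c) :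
    n < k := by
  induction hu generalizing k with
  | var => cases hw with | var h => exact h
  | recur _ ih => cases hw with | recur _ hw => exact Nat.lt_of_succ_lt_succ (ih hw)

theorem exists_eq_iterate_recur_headNormal {k : ℕ} {c : Contract} (hw : WF k c)
    (hg : ∀ n, ¬ UnguardedVar n c) : ∃ j s, c = recur^[j] s ∧ HeadNormal s := by
  induction hw with
  | intSum => exact ⟨0, _, rfl, .intSum _⟩
  | extSum => exact ⟨0, _, rfl, .extSum _⟩
  | rdy => exact ⟨0, _, rfl, .rdy _ _⟩
  | @recur c₀ k hg₀ _ ih =>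
    have hg₀' : ∀ n, ¬ UnguardedVar n c₀
      | 0 => hg₀
      | n + 1 => fun h => hg n (.recur h)
    obtain ⟨j, s, rfl, hs⟩ := ih hg₀'
    exact ⟨j + 1, s, (Function.iterate_succ_apply' _ _ _).symm, hs⟩
  | var => exact absurd .var (hg _)

theorem exists_unfoldsTo_headNormal {c : Contract} (hw : WF 0 c) :
    ∃ s, UnfoldsTo c s ∧ HeadNormal s := by
  obtain ⟨j, s, rfl, hs⟩ :=
    exists_eq_iterate_recur_headNormal hw fun _ hu => Nat.not_lt_zero _ (hu.lt_of_wf hw)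
  exact exists_unfoldsTo_iterate_recur hs j

end Contract

namespace StepA

theorem of_unfoldsTo_left {c s d d' c' : Contract} {a : Atom} (hu : UnfoldsTo c s)
    (h : StepA s d a c' d') : StepA c d a c' d' := by
  induction hu with
  | refl => exact h
  | recur _ ih => exact .recL (ih h)

theorem of_unfoldsTo_right {c d t d' c' : Contract} {a : Atom} (hu : UnfoldsTo d t)
    (h : StepA c t a c' d') : StepA c d a c' d' := by
  induction hu with
  | refl => exact h
  | recur _ ih => exact .recR (ih h)

theorem exists_of_unfoldsTo_headNormal {c d s t c' d' : Contract} {a : Atom}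
    (h : StepA c d a c' d') (hc : UnfoldsTo c s) (hs : HeadNormal s) (hd : UnfoldsTo d t)
    (ht : HeadNormal t) : ∃ d'', StepA s t a c' d'' := by
  induction h with
  | recL _ ih =>
    cases hc with
    | refl => cases hs
    | recur hc => exact ih hc hd
  | recR _ ih =>
    cases hd with
    | refl => cases ht
    | recur hd => exact ih hc hd
  | rdy => cases hc; exact ⟨_, .rdy⟩
  | intExt h₁ h₂ => cases hc; cases hd; exact ⟨_, .intExt h₁ h₂⟩
  | intInt h₁ => cases hc; cases hd; exact ⟨_, .intInt h₁⟩
  | extExt h₁ h₂ => cases hc; cases hd; exact ⟨_, .extExt h₁ h₂⟩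
  | intExtFail h₁ h₂ => cases hc; cases hd; exact ⟨_, .intExtFail h₁ h₂⟩
  | intIntFail h₁ h₂ => cases hc; cases hd; exact ⟨_, .intIntFail h₁ h₂⟩
  | extExtFail h₁ h₂ => cases hc; cases hd; exact ⟨_, .extExtFail h₁ h₂⟩

theorem not_rdy_right_of_rdyFree {c c' d' y : Contract} {a b : Atom} (hc : RdyFree c) :
    ¬ StepA c (.rdy b y) a c' d' := by
  generalize hd : Contract.rdy b y = d
  intro h
  induction h with
  | rdy => cases hc
  | recL _ ih => exact ih (hc.csubst (by cases hc; assumption) 0) hd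
  | _ => cases hd

end StepA

theorem step_says_A_iff {c d : Contract} {a : Atom} {γ : Contract × Contract} :
    Step (c, d) (.says .A a) γ ↔ StepA c d a γ.1 γ.2 :=
  ⟨fun h => by cases h; assumption, fun h => .left h⟩

theorem not_frown_A_of_stuck {c d : Contract} (hz : ¬ isZero c)
    (h : ∀ a c' d', ¬ StepA c d a c' d') : ¬ frown .A (c, d) := by
  rintro (hc | ⟨-, a, γ, hs⟩)
  · exact hz hc
  · exact h _ _ _ (step_says_A_iff.1 hs)

theorem not_frown_A_of_stepA_e {c d c' d' : Contract} (hz : ¬ isZero c)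
    (h : StepA c d eAtom c' d') : ¬ frown .A (c, d) := by
  rintro (hc | ⟨hne, -⟩)
  · exact hz hc
  · exact hne ⟨(c', d'), .left h⟩

theorem not_frown_A_Econ : ¬ frown .A (Econ, .intSum []) :=
  not_frown_A_of_stepA_e (by simp [isZero, Econ])
    (.recL (.intIntFail (c' := Econ) (by simp [csubst, csubstL, Econ]) (by simp)))

theorem not_frown_A_rdy {c y : Contract} {b : Atom} (hz : ZeroFree c) (hr : RdyFree c) :
    ¬ frown .A (c, .rdy b y) :=
  not_frown_A_of_stuck hz.not_isZero fun _ _ _ h => StepA.not_rdy_right_of_rdyFree hr h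

def StuckOrExculpates (c d : Contract) : Prop :=
  (∃ a c' d', StepA c d a c' d' ∧ ¬ frown .A (c', d')) ∨ ∀ a c' d', ¬ StepA c d a c' d'

theorem stuckOrExculpates_intSum {l : List (Atom × Contract)} {t : Contract}
    (hz : ZeroFree (.intSum l)) (hr : RdyFree (.intSum l)) (ht : HeadNormal t) :
    StuckOrExculpates (.intSum l) t := by
  obtain ⟨hne, hzl⟩ : l ≠ [] ∧ ∀ p ∈ l, ZeroFree p.2 := by cases hz; exact ⟨‹_›, ‹_›⟩
  have hrl : ∀ p ∈ l, RdyFree p.2 := by cases hr; assumption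
  obtain ⟨p, hp⟩ := List.exists_mem_of_ne_nil l hne
  cases ht with
  | intSum m =>
    by_cases hsingle : ∃ p ∈ l, ∃ d', m = [(co p.1, d')]
    · obtain ⟨p, hp, d', rfl⟩ := hsingle
      exact .inl ⟨_, _, _, .intInt hp, not_frown_A_rdy (hzl p hp) (hrl p hp)⟩
    by_cases hfail : ∃ p ∈ l, ¬ (m ≠ [] ∧ ∀ q ∈ m, co q.1 = p.1)
    · obtain ⟨p, hp, hf⟩ := hfail
      exact .inl ⟨_, _, _, .intIntFail hp hf, not_frown_A_Econ⟩
    refine .inr fun a c' d' h => ?_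
    cases h with
    | intInt hp => exact hsingle ⟨_, hp, _, rfl⟩
    | intIntFail hp hf => exact hfail ⟨_, hp, hf⟩
  | extSum m =>
    by_cases hmatch : ∃ d', (co p.1, d') ∈ m
    · obtain ⟨d', hd'⟩ := hmatch
      exact .inl ⟨_, _, _, .intExt hp hd', not_frown_A_rdy (hzl p hp) (hrl p hp)⟩
    refine .inl ⟨_, _, _, .intExtFail hp fun q hq he => hmatch ⟨q.2, ?_⟩, not_frown_A_Econ⟩
    rwa [← he, co_co]
  | rdy => exact .inr fun _ _ _ h => by cases h

theorem stuckOrExculpates_extSum {l : List (Atom × Contract)} {t : Contract}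
    (hz : ZeroFree (.extSum l)) (hr : RdyFree (.extSum l)) (ht : HeadNormal t) :
    StuckOrExculpates (.extSum l) t := by
  obtain ⟨hne, hzl⟩ : l ≠ [] ∧ ∀ p ∈ l, ZeroFree p.2 := by cases hz; exact ⟨‹_›, ‹_›⟩
  have hrl : ∀ p ∈ l, RdyFree p.2 := by cases hr; assumption
  obtain ⟨p, hp⟩ := List.exists_mem_of_ne_nil l hne
  cases ht with
  | intSum => exact .inr fun _ _ _ h => by cases h
  | extSum m =>
    by_cases hmatch : ∃ p ∈ l, ∃ q ∈ m, p.1 = co q.1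
    · obtain ⟨p, hp, q, hq, he⟩ := hmatch
      have hq' : (co p.1, q.2) ∈ m := by rwa [he, co_co]
      exact .inl ⟨_, _, _, .extExt hp hq', not_frown_A_rdy (hzl p hp) (hrl p hp)⟩
    push Not at hmatch
    exact .inl ⟨_, _, _, .extExtFail hp hmatch, not_frown_A_Econ⟩
  | rdy => exact .inr fun _ _ _ h => by cases h

theorem Contract.HeadNormal.stuckOrExculpates {s t : Contract} (hs : HeadNormal s) (ht : HeadNormal t)
    (hz : ZeroFree s) (hr : RdyFree s) : StuckOrExculpates s t := by
  cases hs with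
  | intSum => exact stuckOrExculpates_intSum hz hr ht
  | extSum => exact stuckOrExculpates_extSum hz hr ht
  | rdy => cases hr

theorem exists_not_frown_A_of_rdyFree {c d : Contract} (hc : WF 0 c) (hd : WF 0 d)
    (hr : RdyFree c) (hz : ZeroFree c) :
    ∃ γ', (γ' = (c, d) ∨ ∃ a, Step (c, d) (.says .A a) γ') ∧ ¬ frown .A γ' := by
  obtain ⟨s, hcs, hs⟩ := exists_unfoldsTo_headNormal hc
  obtain ⟨t, hdt, ht⟩ := exists_unfoldsTo_headNormal hd
  rcases hs.stuckOrExculpates ht (hcs.zeroFree hz) (hcs.rdyFree hr) with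
    ⟨a, c', d', hst, hγ'⟩ | hstuck
  · exact ⟨(c', d'), .inr ⟨a, .left ((hst.of_unfoldsTo_right hdt).of_unfoldsTo_left hcs)⟩, hγ'⟩
  · refine ⟨(c, d), .inl rfl, not_frown_A_of_stuck hz.not_isZero fun a c' d' h => ?_⟩
    obtain ⟨d'', hst⟩ := h.exists_of_unfoldsTo_headNormal hcs hs hdt ht
    exact hstuck a c' d'' hst

/-- contractual exculpation. For every bilateral contract with a
`0`-free contract of `A`, there is an `A`-solo trace of length at most 2 after
which `A` is not culpable. -/
theorem stmt9 (c d : Contract) (hc : Contract.WF 0 c) (hd : Contract.WF 0 d)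
    (hb : BCWF (c, d)) (h0 : Contract.ZeroFree c) :
    ∃ γ' : Contract × Contract,
      (γ' = (c, d) ∨
       (∃ a, Step (c, d) (.says .A a) γ') ∨
       (∃ a b γ₁, Step (c, d) (.says .A a) γ₁ ∧ Step γ₁ (.says .A b) γ')) ∧
      ¬ frown .A γ' := by
  obtain ⟨htop, -⟩ := hb
  rcases htop with hr | ⟨a, c₁, rfl, hr₁⟩
  · obtain ⟨γ', hreach, hγ'⟩ := exists_not_frown_A_of_rdyFree hc hd hr h0
    exact ⟨γ', hreach.imp_right .inl, hγ'⟩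
  · have hwf₁ : WF 0 c₁ := by cases hc; assumption
    have hz₁ : ZeroFree c₁ := by cases h0; assumption
    obtain ⟨γ', hreach, hγ'⟩ := exists_not_frown_A_of_rdyFree hwf₁ hd hr₁ hz₁
    refine ⟨γ', .inr ?_, hγ'⟩
    rcases hreach with rfl | ⟨b, hstep⟩
    · exact .inl ⟨a, .left .rdy⟩
    · exact .inr ⟨a, b, _, .left .rdy, hstep⟩
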